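/- arXiv:1609.04005 — 3 statements merged into one kernel-verified Lean document; each statement's English description precedes it below -/
import Mathlib

section
/- The algebraic sum of a Sierpiński set and a perfectly null set is an s₀-set: if S ⊆ 2^ω is a Sierpiński set and X ⊆ 2^ω is perfectly null, then S + X is an s₀-set. -/
open MeasureTheory Set Pointwise

/-- The Cantor space `2^ω`, a compact topological group under coordinatewise
addition mod 2. -/
abbrev CS := ℕ → ZMod 2

/-- The basic clopen set `[w]` determined by a finite binary sequence `w`:
all `x ∈ 2^ω` extending `w`. -/
def cyl (w : List (ZMod 2)) : Set CS := {x | ∀ i, i < w.length → x i = w.getD i 0}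

/-- `w` is a branching node of `P`: both `[w⌢0] ∩ P` and `[w⌢1] ∩ P` are nonempty. -/
def Branch (P : Set CS) (w : List (ZMod 2)) : Prop :=
  (cyl (w ++ [0]) ∩ P).Nonempty ∧ (cyl (w ++ [1]) ∩ P).Nonempty

/-- A perfect subset of Cantor space: nonempty, closed, with no isolated points. -/
def PerfSet (P : Set CS) : Prop := Perfect P ∧ P.Nonempty

/-- `ν` is a canonical measure of the perfect set `P`: a Borel probability measure with
`ν P = 1` and `ν [w⌢0] = ν [w⌢1]` for every branching node `w` of `P`. -/
def IsCanonical (P : Set CS) (ν : Measure CS) : Prop :=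
  IsProbabilityMeasure ν ∧ ν P = 1 ∧
    ∀ w : List (ZMod 2), Branch P w → ν (cyl (w ++ [0])) = ν (cyl (w ++ [1]))

/-- `A` is `P`-null: the `μ_P`-outer measure of `A ∩ P` is `0`
(quantified over all canonical measures of `P`). -/
def PNull (P A : Set CS) : Prop := ∀ ν : Measure CS, IsCanonical P ν → ν (A ∩ P) = 0

/-- `A` is `P`-measurable: `A ∩ P` differs from a Borel set by a `P`-null set,
i.e. it is null-measurable with respect to the canonical measure of `P`. -/
def PMeasurable (P A : Set CS) : Prop :=
  ∀ ν : Measure CS, IsCanonical P ν → NullMeasurableSet (A ∩ P) ν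

/-- `X` is perfectly null: `P`-null for every perfect set `P`. -/
def PerfectlyNull (X : Set CS) : Prop := ∀ P, PerfSet P → PNull P X

/-- `μ` is the fair-coin (Lebesgue product) measure on `2^ω`:
a Borel probability measure with `μ [w] = 2^{-|w|}` for every finite binary sequence. -/
def IsFairCoin (μ : Measure CS) : Prop :=
  IsProbabilityMeasure μ ∧ ∀ w : List (ZMod 2), μ (cyl w) = (2 : ENNReal)⁻¹ ^ w.length

/-- The number of branching nodes of `P` that are proper initial segments of `v`. -/
noncomputable def brCount (P : Set CS) (v : List (ZMod 2)) : ℕ :=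
  Set.ncard {u : List (ZMod 2) | u <+: v ∧ u ≠ v ∧ Branch P u}

/-- A balanced perfect set: branching nodes of strictly smaller level
are strictly shorter. -/
def BalancedPerf (P : Set CS) : Prop :=
  PerfSet P ∧ ∀ v w : List (ZMod 2), Branch P v → Branch P w →
    brCount P v < brCount P w → v.length < w.length

/-- A uniformly perfect set: on each length, either all nodes meeting `P` branch,
or none does. -/
def UniformlyPerf (P : Set CS) : Prop :=
  PerfSet P ∧ ∀ n : ℕ,
    (∀ w : List (ZMod 2), w.length = n → (cyl w ∩ P).Nonempty → Branch P w) ∨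
    (∀ w : List (ZMod 2), w.length = n → ¬ Branch P w)

/-- A Silver perfect set: determined by a partial function `ℕ ⇀ 2`
whose domain has infinite complement. -/
def SilverPerf (P : Set CS) : Prop :=
  ∃ f : ℕ → Option (ZMod 2), {n | f n = none}.Infinite ∧
    P = {x | ∀ n b, f n = some b → x n = b}

/-- A Marczewski null (`s₀`) set. -/
def S0Set (X : Set CS) : Prop :=
  ∀ P, PerfSet P → ∃ Q, PerfSet Q ∧ Q ⊆ P ∧ Q ∩ X = ∅

/-- `S` is a Sierpiński set with respect to the measure `μ`: uncountable, with
countable intersection with every `μ`-null set. -/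
def Sierpinski (μ : Measure CS) (S : Set CS) : Prop :=
  ¬ S.Countable ∧ ∀ N : Set CS, μ N = 0 → (S ∩ N).Countable

/-- The interleaving homeomorphism `h : 2^ω × 2^ω → 2^ω`,
`h(x,y) = ⟨x 0, y 0, x 1, y 1, …⟩`. -/
def interleave (p : CS × CS) : CS := fun n => if n % 2 = 0 then p.1 (n / 2) else p.2 (n / 2)

/-- `X` is universally null: outer measure zero with respect to every finite diffused
Borel measure on `2^ω`. -/
def UniversallyNull (X : Set CS) : Prop :=
  ∀ μ : Measure CS, IsFiniteMeasure μ → (∀ x : CS, μ {x} = 0) → μ X = 0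

/-- `X` is strongly null: for every sequence of positive `ε n` there are sets `A n` of
diameter `< ε n` (with respect to the standard metric `d(x,y) = 2^{-min{n : x n ≠ y n}}`,
expressed combinatorially) covering `X`. -/
def StronglyNull (X : Set CS) : Prop :=
  ∀ ε : ℕ → ℝ, (∀ n, 0 < ε n) → ∃ A : ℕ → Set CS,
    (∀ n, ∃ N : ℕ, (2 : ℝ)⁻¹ ^ N < ε n ∧ ∀ x ∈ A n, ∀ y ∈ A n, ∀ i < N, x i = y i) ∧
    X ⊆ ⋃ n, A n

/-- `X` is perfectly null in the transitive sense: for every perfect `P` there is a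
`G_δ` set `G ⊇ X` with `(G + t) ∩ P` being `P`-null for every `t`. -/
def PNPrime (X : Set CS) : Prop :=
  ∀ P, PerfSet P → ∃ G : Set CS, IsGδ G ∧ X ⊆ G ∧
    ∀ t : CS, PNull P ((fun g => g + t) '' G)

/-!
A perfectly null set is Lebesgue null. Given a perfect set `P`, a fusion argument produces a
perfect `Q ⊆ P` whose splitting levels grow so fast that `Q + X` is still null; the image `ν` of
the fair-coin measure under the resulting homeomorphism `2^ω ≅ Q` is a canonical measure of `Q`.
Since `S` is Sierpiński, `S ∩ (Q + X)` is countable, so `(S + X) ∩ Q` is covered by countably many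
sets `(s + X) ∩ Q`. Each of these is `ν`-null, because translating by `s` carries `Q` and `ν` to a
perfect set with its canonical measure, and `X` is perfectly null. Finally, the complement in `Q`
of a `ν`-null set contains a perfect set.
-/

open Filter Topology
open scoped ENNReal

lemma Perfect.image_of_isCompact {X Y : Type*} [TopologicalSpace X] [TopologicalSpace Y]
    [T2Space Y] {C : Set X} (hC : Perfect C) (hCc : IsCompact C) {f : X → Y}
    (hf : Continuous f) (hinj : Function.Injective f) : Perfect (f '' C) := by
  refine ⟨(hCc.image hf).isClosed, ?_⟩
  rintro _ ⟨x, hx, rfl⟩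
  simpa [Filter.map_principal] using (hC.acc x hx).map hf.continuousAt hinj

lemma MeasureTheory.Measure.nullSingletonClass_map {α β : Type*} [MeasurableSpace α]
    [MeasurableSpace β] [MeasurableSingletonClass β] {μ : Measure α} [NullSingletonClass μ]
    {f : α → β} (hf : Measurable f) (hinj : Function.Injective f) :
    NullSingletonClass (μ.map f) :=
  ⟨fun x => by
    rw [Measure.map_apply hf (measurableSet_singleton x)]
    exact (subsingleton_singleton.preimage hinj).countable.measure_zero μ⟩

lemma ENNReal.two_pow_mul_inv_two_pow_add (a b : ℕ) : (2 : ℝ≥0∞) ^ a * 2⁻¹ ^ (a + b) = 2⁻¹ ^ b := by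
  rw [pow_add, ← mul_assoc, ← mul_pow, ENNReal.mul_inv_cancel two_ne_zero ENNReal.ofNat_ne_top,
    one_pow, one_mul]

lemma ENNReal.tendsto_tsum_ite_lt_atTop {ι : Type*} {f : ι → ℝ≥0∞} (hf : ∑' i, f i ≠ ∞)
    (ℓ : ι → ℕ) : Tendsto (fun L => ∑' i, if L < ℓ i then f i else 0) atTop (𝓝 0) := by
  refine ENNReal.tendsto_nhds_zero.2 fun ε hε => ?_
  obtain ⟨s, hs⟩ := ((ENNReal.tendsto_tsum_compl_atTop_zero hf).eventually
    (Iic_mem_nhds hε)).exists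
  filter_upwards [eventually_ge_atTop (s.sup ℓ)] with L hL
  have hsupp : Function.support (fun i => if L < ℓ i then f i else 0) ⊆ {i | i ∉ s} :=
    fun i hi his => hi (if_neg (not_lt.2 ((Finset.le_sup (f := ℓ) his).trans hL)))
  rw [← tsum_subtype_eq_of_support_subset hsupp]
  exact (ENNReal.tsum_le_tsum fun i => by split_ifs <;> simp).trans hs

lemma exists_perfect_subset_disjoint_of_measure_eq_zero {α : Type*} [TopologicalSpace α]
    [SecondCountableTopology α] [MeasurableSpace α] {ν : Measure α} [ν.WeaklyRegular]
    [NullSingletonClass ν] {B Z : Set α} (hB : MeasurableSet B) (hνB : ν B ≠ 0)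
    (hνB' : ν B ≠ ∞) (hZ : ν Z = 0) : ∃ D, Perfect D ∧ D.Nonempty ∧ D ⊆ B ∧ Disjoint D Z := by
  obtain ⟨W, hZW, hW, hW0⟩ := exists_measurable_superset_of_null hZ
  obtain ⟨K, hKB, hK, hνK⟩ := (hB.diff hW).exists_lt_isClosed_of_ne_top
    (by rwa [measure_sdiff_null hW0]) (by rwa [measure_sdiff_null hW0, pos_iff_ne_zero])
  obtain ⟨D, hD, hDne, hDK⟩ :=
    exists_perfect_nonempty_of_isClosed_of_not_countable hK fun hc => hνK.ne' (hc.measure_zero ν)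
  exact ⟨D, hD, hDne, fun x hx => (hKB (hDK hx)).1,
    Set.disjoint_left.2 fun x hxD hxZ => (hKB (hDK hxD)).2 (hZW hxZ)⟩

namespace Cantor

lemma zmod_two_eq_zero_or_eq_one : ∀ a : ZMod 2, a = 0 ∨ a = 1 := by decide

lemma zmod_two_eq_or_eq_of_ne : ∀ {a b : ZMod 2}, a ≠ b → ∀ c, c = a ∨ c = b := by decide

lemma add_self_eq_zero (x : CS) : x + x = 0 := funext fun n => CharTwo.add_self_eq_zero (x n)

lemma add_add_cancel_left (s x : CS) : s + (s + x) = x := by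
  rw [← add_assoc, add_self_eq_zero, zero_add]

def take (x : CS) (n : ℕ) : List (ZMod 2) := List.ofFn fun i : Fin n => x i

@[simp] lemma length_take (x : CS) (n : ℕ) : (take x n).length = n := by simp [take]

lemma getD_take (x : CS) {i n : ℕ} (h : i < n) : (take x n).getD i 0 = x i := by
  simp [take, h]

lemma take_succ (x : CS) (n : ℕ) : take x (n + 1) = take x n ++ [x n] := by
  rw [take, List.ofFn_succ', List.concat_eq_append]
  rfl

lemma take_prefix_take (x : CS) {m n : ℕ} (h : m ≤ n) : take x m <+: take x n := by
  induction n, h using Nat.le_induction with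
  | base => exact List.prefix_refl _
  | succ n _ ih => exact ih.trans (take_succ x n ▸ List.prefix_append _ _)

lemma mem_cyl_take {x y : CS} {n : ℕ} : y ∈ cyl (take x n) ↔ ∀ i < n, y i = x i := by
  simp only [cyl, mem_ofPred_eq, length_take]
  exact forall₂_congr fun i hi => by rw [getD_take x hi]

lemma mem_cyl_take_self (x : CS) (n : ℕ) : x ∈ cyl (take x n) := mem_cyl_take.2 fun _ _ => rfl

lemma take_congr {x y : CS} {n : ℕ} (h : ∀ i < n, x i = y i) : take x n = take y n := by
  simp only [take, List.ofFn_inj]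
  exact funext fun i => h i i.2

lemma mem_cyl_iff_take_eq {x : CS} {w : List (ZMod 2)} : x ∈ cyl w ↔ take x w.length = w := by
  refine ⟨fun h => List.ext_getElem (by simp) fun i hi _ => ?_, fun h i hi => ?_⟩
  · have := h i (by simpa using hi)
    rw [List.getD_eq_getElem _ _ (by simpa using hi)] at this
    simpa [take] using this
  · rw [← h, getD_take x hi]

lemma getD_eq_of_prefix {u w : List (ZMod 2)} (h : u <+: w) {i : ℕ} (hi : i < u.length) :
    u.getD i 0 = w.getD i 0 := by
  rw [List.getD_eq_getElem _ _ hi, List.getD_eq_getElem _ _ (hi.trans_le h.length_le),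
    h.getElem hi]

lemma cyl_anti {u w : List (ZMod 2)} (h : u <+: w) : cyl w ⊆ cyl u := fun x hx i hi => by
  rw [hx i (hi.trans_le h.length_le), getD_eq_of_prefix h hi]

lemma coord_eq_of_mem_cyl_append {x : CS} {u : List (ZMod 2)} {a : ZMod 2}
    (h : x ∈ cyl (u ++ [a])) : x u.length = a := by
  simpa using h u.length (by simp)

lemma take_eq_of_mem_cyl_append {x : CS} {u : List (ZMod 2)} {a : ZMod 2}
    (h : x ∈ cyl (u ++ [a])) : take x (u.length + 1) = u ++ [a] := by
  simpa using mem_cyl_iff_take_eq.1 h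

lemma cyl_eq_iInter (w : List (ZMod 2)) :
    cyl w = ⋂ i : Fin w.length, (fun x : CS => x i) ⁻¹' {w.getD i 0} := by
  ext x
  simp only [mem_iInter, mem_preimage, mem_singleton_iff]
  exact ⟨fun h i => h i i.2, fun h i hi => h ⟨i, hi⟩⟩

lemma isClopen_cyl (w : List (ZMod 2)) : IsClopen (cyl w) := by
  rw [cyl_eq_iInter]
  exact isClopen_iInter_of_finite fun i => (isClopen_discrete _).preimage (continuous_apply _)

lemma measurableSet_cyl (w : List (ZMod 2)) : MeasurableSet (cyl w) :=
  (isClopen_cyl w).isClosed.measurableSet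

lemma exists_cyl_take_subset {x : CS} {U : Set CS} (hU : IsOpen U) (hx : x ∈ U) :
    ∃ n, cyl (take x n) ⊆ U := by
  obtain ⟨I, u, hIu, hsub⟩ := isOpen_pi_iff.1 hU x hx
  refine ⟨I.sup id + 1, fun y hy => hsub fun i hi => ?_⟩
  rw [mem_cyl_take.1 hy i (Nat.lt_succ_of_le (Finset.le_sup (f := id) hi))]
  exact (hIu i hi).2

lemma prefix_or_prefix_of_mem_cyl {u w : List (ZMod 2)} {x : CS} (hu : x ∈ cyl u)
    (hw : x ∈ cyl w) : u <+: w ∨ w <+: u := by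
  rw [mem_cyl_iff_take_eq] at hu hw
  rw [← hu, ← hw]
  exact (le_total _ _).imp (take_prefix_take x) (take_prefix_take x)

lemma exists_ne_forall_lt_eq {x y : CS} (h : x ≠ y) : ∃ n, x n ≠ y n ∧ ∀ i < n, x i = y i := by
  classical
  have hex : ∃ n, x n ≠ y n := Function.ne_iff.1 h
  exact ⟨Nat.find hex, Nat.find_spec hex, fun i hi => not_not.1 (Nat.find_min hex hi)⟩

lemma perfect_univ : Perfect (univ : Set CS) := by
  refine ⟨isClosed_univ, fun x _ => accPt_iff_nhds.2 fun U hU => ?_⟩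
  obtain ⟨n, hn⟩ := exists_cyl_take_subset (isOpen_interior) (mem_interior_iff_mem_nhds.2 hU)
  refine ⟨Function.update x n (x n + 1), ⟨interior_subset (hn ?_), trivial⟩, fun h => ?_⟩
  · exact mem_cyl_take.2 fun i hi => Function.update_of_ne hi.ne _ _
  · simpa using congrFun h n

lemma length_le_of_mem_cyl_append {x y : CS} {u v : List (ZMod 2)} {a a' : ZMod 2}
    (hxu : x ∈ cyl (u ++ [a])) (hyu : y ∈ cyl (u ++ [a'])) (ha : a ≠ a') (hxv : x ∈ cyl v)
    (hyv : y ∈ cyl v) : v.length ≤ u.length := by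
  by_contra! h
  exact ha ((coord_eq_of_mem_cyl_append hxu).symm.trans <|
    (hxv _ h).trans <| (hyv _ h).symm.trans (coord_eq_of_mem_cyl_append hyu))

lemma eq_of_mem_cyl_append {x y : CS} {u v : List (ZMod 2)} {a a' c c' : ZMod 2}
    (hxu : x ∈ cyl (u ++ [a])) (hyu : y ∈ cyl (u ++ [a'])) (ha : a ≠ a')
    (hxv : x ∈ cyl (v ++ [c])) (hyv : y ∈ cyl (v ++ [c'])) (hc : c ≠ c') : u = v := by
  have hu := cyl_anti (List.prefix_append u [a]) hxu
  have hv := cyl_anti (List.prefix_append v [c]) hxv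
  have hlen := le_antisymm
    (length_le_of_mem_cyl_append hxv hyv hc hu (cyl_anti (List.prefix_append u [a']) hyu))
    (length_le_of_mem_cyl_append hxu hyu ha hv (cyl_anti (List.prefix_append v [c']) hyv))
  rw [← mem_cyl_iff_take_eq.1 hu, ← mem_cyl_iff_take_eq.1 hv, hlen]

lemma branch_of_ne {R : Set CS} {v : List (ZMod 2)} {a b : ZMod 2} (hab : a ≠ b)
    (ha : (cyl (v ++ [a]) ∩ R).Nonempty) (hb : (cyl (v ++ [b]) ∩ R).Nonempty) : Branch R v := by
  have key : ∀ c, (cyl (v ++ [c]) ∩ R).Nonempty := fun c => by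
    rcases zmod_two_eq_or_eq_of_ne hab c with rfl | rfl <;> assumption
  exact ⟨key 0, key 1⟩

lemma _root_.Branch.nonempty {R : Set CS} {v : List (ZMod 2)} (h : Branch R v) (a : ZMod 2) :
    (cyl (v ++ [a]) ∩ R).Nonempty := by
  rcases zmod_two_eq_zero_or_eq_one a with rfl | rfl
  exacts [h.1, h.2]

section Fusion

variable {P : Set CS}

lemma exists_branch_extension (hP : Perfect P) {w : List (ZMod 2)} (hw : (cyl w ∩ P).Nonempty)
    (L : ℕ) : ∃ v, w <+: v ∧ L ≤ v.length ∧ Branch P v := by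
  obtain ⟨x, hxw, hxP⟩ := hw
  set N := max L w.length
  obtain ⟨y, ⟨hyN, hyP⟩, hyx⟩ := (accPt_iff_nhds.1 (hP.acc x hxP)) _
    ((isClopen_cyl (take x N)).isOpen.mem_nhds (mem_cyl_take_self x N))
  obtain ⟨n, hxyn, hbelow⟩ := exists_ne_forall_lt_eq (Ne.symm hyx)
  have hNn : N ≤ n := by
    by_contra! h
    exact hxyn (mem_cyl_take.1 hyN n h).symm
  refine ⟨take x n, ?_, (le_max_left _ _).trans (by simpa only [length_take] using hNn), ?_⟩
  · rw [← mem_cyl_iff_take_eq.1 hxw]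
    exact take_prefix_take x ((le_max_right _ _).trans hNn)
  · refine branch_of_ne hxyn ⟨x, ?_, hxP⟩ ⟨y, ?_, hyP⟩
    · rw [← take_succ]; exact mem_cyl_take_self x _
    · rw [take_congr hbelow, ← take_succ]; exact mem_cyl_take_self y _

variable (P)

open Classical in
noncomputable def splitAbove (w : List (ZMod 2)) (L : ℕ) : List (ZMod 2) :=
  if h : Perfect P ∧ (cyl w ∩ P).Nonempty then (exists_branch_extension h.1 h.2 L).choose else w

lemma splitAbove_spec (hP : Perfect P) {w : List (ZMod 2)} (hw : (cyl w ∩ P).Nonempty)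
    (L : ℕ) : w <+: splitAbove P w L ∧ L ≤ (splitAbove P w L).length ∧
      Branch P (splitAbove P w L) := by
  rw [splitAbove, dif_pos ⟨hP, hw⟩]
  exact (exists_branch_extension hP hw L).choose_spec

variable (A : ℕ → ℕ)

-- Recursion on the reversed word, so that the defining equations extend `σ` at its end.
noncomputable def splitNodeRev : List (ZMod 2) → List (ZMod 2)
  | [] => splitAbove P [] (A 0)
  | a :: σ => splitAbove P (splitNodeRev σ ++ [a]) (A (σ.length + 1))

noncomputable def splitNode (σ : List (ZMod 2)) : List (ZMod 2) := splitNodeRev P A σ.reverse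

lemma splitNode_concat (σ : List (ZMod 2)) (a : ZMod 2) :
    splitNode P A (σ ++ [a]) = splitAbove P (splitNode P A σ ++ [a]) (A (σ.length + 1)) := by
  simp [splitNode, splitNodeRev]

variable {P}

lemma branch_splitNode (hP : Perfect P) (hPne : P.Nonempty) (σ : List (ZMod 2)) :
    Branch P (splitNode P A σ) := by
  induction σ using List.reverseRecOn with
  | nil => exact (splitAbove_spec P hP (by simpa [cyl] using hPne) _).2.2
  | append_singleton σ a ih =>
    rw [splitNode_concat]
    exact (splitAbove_spec P hP (Branch.nonempty ih a) _).2.2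

lemma le_length_splitNode (hP : Perfect P) (hPne : P.Nonempty) (σ : List (ZMod 2)) :
    A σ.length ≤ (splitNode P A σ).length := by
  induction σ using List.reverseRecOn with
  | nil => exact (splitAbove_spec P hP (by simpa [cyl] using hPne) _).2.1
  | append_singleton σ a _ =>
    rw [splitNode_concat]
    simpa using (splitAbove_spec P hP (Branch.nonempty (branch_splitNode A hP hPne σ) a) _).2.1

lemma splitNode_append_prefix (hP : Perfect P) (hPne : P.Nonempty) (σ : List (ZMod 2))
    (a : ZMod 2) : splitNode P A σ ++ [a] <+: splitNode P A (σ ++ [a]) := by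
  rw [splitNode_concat]
  exact (splitAbove_spec P hP (Branch.nonempty (branch_splitNode A hP hPne σ) a) _).1

lemma length_le_length_splitNode (hP : Perfect P) (hPne : P.Nonempty) (σ : List (ZMod 2)) :
    σ.length ≤ (splitNode P A σ).length := by
  induction σ using List.reverseRecOn with
  | nil => exact Nat.zero_le _
  | append_singleton σ a ih =>
    have := (splitNode_append_prefix A hP hPne σ a).length_le
    simp only [List.length_append, List.length_singleton] at this ⊢
    omega

lemma splitNode_prefix_splitNode (hP : Perfect P) (hPne : P.Nonempty) {σ τ : List (ZMod 2)}
    (h : σ <+: τ) : splitNode P A σ <+: splitNode P A τ := by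
  induction τ using List.reverseRecOn with
  | nil => rw [List.prefix_nil.1 h]
  | append_singleton τ a ih =>
    rcases List.prefix_concat_iff.1 h with rfl | h
    · exact List.prefix_refl _
    · exact (ih h).trans ((List.prefix_append _ _).trans (splitNode_append_prefix A hP hPne τ a))

variable (P)

noncomputable def fusionMap (b : CS) : CS := fun n => (splitNode P A (take b (n + 1))).getD n 0

noncomputable def fusionSet : Set CS := range (fusionMap P A)

variable {P}

lemma fusionMap_mem_cyl (hP : Perfect P) (hPne : P.Nonempty) (b : CS) (n : ℕ) :
    fusionMap P A b ∈ cyl (splitNode P A (take b n)) := by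
  intro i hi
  rcases le_total (i + 1) n with h | h
  · refine getD_eq_of_prefix (splitNode_prefix_splitNode A hP hPne (take_prefix_take b h)) ?_
    simpa using length_le_length_splitNode A hP hPne (take b (i + 1))
  · exact (getD_eq_of_prefix (splitNode_prefix_splitNode A hP hPne (take_prefix_take b h)) hi).symm

lemma fusionMap_mem_cyl_append (hP : Perfect P) (hPne : P.Nonempty) (b : CS) (n : ℕ) :
    fusionMap P A b ∈ cyl (splitNode P A (take b n) ++ [b n]) := by
  refine cyl_anti (splitNode_append_prefix A hP hPne _ _) ?_
  rw [← take_succ]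
  exact fusionMap_mem_cyl A hP hPne b (n + 1)

lemma take_succ_eq_of_fusionMap_mem_cyl_append (hP : Perfect P) (hPne : P.Nonempty) {b : CS}
    {σ : List (ZMod 2)} {a : ZMod 2} (hσ : take b σ.length = σ)
    (h : fusionMap P A b ∈ cyl (splitNode P A σ ++ [a])) : take b (σ.length + 1) = σ ++ [a] := by
  have hb := fusionMap_mem_cyl_append A hP hPne b σ.length
  rw [hσ] at hb
  rw [take_succ, hσ, ← coord_eq_of_mem_cyl_append h, coord_eq_of_mem_cyl_append hb]

lemma take_eq_of_fusionMap_mem_cyl (hP : Perfect P) (hPne : P.Nonempty) {b : CS}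
    {σ : List (ZMod 2)} (h : fusionMap P A b ∈ cyl (splitNode P A σ)) : take b σ.length = σ := by
  induction σ using List.reverseRecOn with
  | nil => rfl
  | append_singleton σ a ih =>
    have h' := cyl_anti (splitNode_append_prefix A hP hPne σ a) h
    simpa using take_succ_eq_of_fusionMap_mem_cyl_append A hP hPne
      (ih (cyl_anti (List.prefix_append _ _) h')) h'

lemma fusionMap_mem_cyl_iff (hP : Perfect P) (hPne : P.Nonempty) {b : CS}
    {σ : List (ZMod 2)} : fusionMap P A b ∈ cyl (splitNode P A σ) ↔ take b σ.length = σ :=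
  ⟨take_eq_of_fusionMap_mem_cyl A hP hPne, fun h => h ▸ fusionMap_mem_cyl A hP hPne b _⟩

lemma fusionMap_injective (hP : Perfect P) (hPne : P.Nonempty) :
    Function.Injective (fusionMap P A) := by
  intro b b' h
  funext n
  have hn := take_eq_of_fusionMap_mem_cyl A hP hPne (h ▸ fusionMap_mem_cyl A hP hPne b (n + 1))
  exact (by simpa [take_succ] using hn.symm : _ ∧ b n = b' n).2

lemma continuous_fusionMap : Continuous (fusionMap P A) := by
  refine continuous_pi fun n => ?_
  have : (fun b => fusionMap P A b n) =
      (fun v : Fin (n + 1) → ZMod 2 => (splitNode P A (List.ofFn v)).getD n 0) ∘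
        fun b i => b i := rfl
  rw [this]
  exact continuous_of_discreteTopology.comp (continuous_pi fun i => continuous_apply _)

lemma fusionMap_mem (hP : Perfect P) (hPne : P.Nonempty) (b : CS) : fusionMap P A b ∈ P := by
  refine hP.closed.closure_subset (mem_closure_iff.2 fun U hU hbU => ?_)
  obtain ⟨n, hn⟩ := exists_cyl_take_subset hU hbU
  obtain ⟨x, hx, hxP⟩ := Branch.nonempty (branch_splitNode A hP hPne (take b n)) 0
  refine ⟨x, hn (mem_cyl_take.2 fun i hi => ?_), hxP⟩
  have hi' : i < (splitNode P A (take b n)).length :=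
    hi.trans_le (by simpa using length_le_length_splitNode A hP hPne (take b n))
  rw [cyl_anti (List.prefix_append _ _) hx i hi', fusionMap_mem_cyl A hP hPne b n i hi']

lemma isClosed_fusionSet : IsClosed (fusionSet P A) :=
  (isCompact_range (continuous_fusionMap A)).isClosed

lemma perfect_fusionSet (hP : Perfect P) (hPne : P.Nonempty) : Perfect (fusionSet P A) := by
  rw [fusionSet, ← image_univ]
  exact perfect_univ.image_of_isCompact isCompact_univ (continuous_fusionMap A)
    (fusionMap_injective A hP hPne)

lemma fusionSet_subset (hP : Perfect P) (hPne : P.Nonempty) : fusionSet P A ⊆ P :=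
  range_subset_iff.2 (fusionMap_mem A hP hPne)

lemma preimage_fusionMap_cyl_append (hP : Perfect P) (hPne : P.Nonempty) (σ : List (ZMod 2))
    (a : ZMod 2) : fusionMap P A ⁻¹' cyl (splitNode P A σ ++ [a]) = cyl (σ ++ [a]) := by
  ext b
  rw [mem_preimage, mem_cyl_iff_take_eq (w := σ ++ [a]), List.length_append,
    List.length_singleton]
  refine ⟨fun h => ?_, fun h => ?_⟩
  · exact take_succ_eq_of_fusionMap_mem_cyl_append A hP hPne
      (take_eq_of_fusionMap_mem_cyl A hP hPne (cyl_anti (List.prefix_append _ _) h)) h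
  · refine cyl_anti (splitNode_append_prefix A hP hPne σ a) ((fusionMap_mem_cyl_iff A hP hPne).2 ?_)
    simpa using h

lemma exists_eq_splitNode_of_branch (hP : Perfect P) (hPne : P.Nonempty) {u : List (ZMod 2)}
    (hu : Branch (fusionSet P A) u) : ∃ σ, u = splitNode P A σ := by
  obtain ⟨⟨_, hx, b, rfl⟩, ⟨_, hy, b', rfl⟩⟩ := hu
  have hne : b ≠ b' := by
    rintro rfl
    exact zero_ne_one ((coord_eq_of_mem_cyl_append hx).symm.trans (coord_eq_of_mem_cyl_append hy))
  obtain ⟨n, hbn, hbelow⟩ := exists_ne_forall_lt_eq hne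
  have hb' := fusionMap_mem_cyl_append A hP hPne b' n
  rw [← take_congr hbelow] at hb'
  exact ⟨take b n, eq_of_mem_cyl_append hx hy zero_ne_one
    (fusionMap_mem_cyl_append A hP hPne b n) hb' hbn⟩

lemma isCanonical_map_fusionMap {μ : Measure CS} (hμ : IsFairCoin μ) (hP : Perfect P)
    (hPne : P.Nonempty) : IsCanonical (fusionSet P A) (μ.map (fusionMap P A)) := by
  have hm := (continuous_fusionMap (P := P) A).measurable
  have := hμ.1
  refine ⟨Measure.isProbabilityMeasure_map hm.aemeasurable, ?_, fun u hu => ?_⟩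
  · rw [Measure.map_apply hm (isClosed_fusionSet A).measurableSet, fusionSet, preimage_range,
      measure_univ]
  · obtain ⟨σ, rfl⟩ := exists_eq_splitNode_of_branch A hP hPne hu
    rw [Measure.map_apply hm (measurableSet_cyl _), Measure.map_apply hm (measurableSet_cyl _),
      preimage_fusionMap_cyl_append A hP hPne, preimage_fusionMap_cyl_append A hP hPne, hμ.2,
      hμ.2]
    simp

end Fusion

section FairCoin

variable {μ : Measure CS}

lemma measure_cyl_take (hμ : IsFairCoin μ) (x : CS) (n : ℕ) :
    μ (cyl (take x n)) = 2⁻¹ ^ n := by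
  rw [hμ.2, length_take]

lemma measure_singleton_eq_zero (hμ : IsFairCoin μ) (x : CS) : μ {x} = 0 := by
  refine le_antisymm (le_of_forall_gt fun ε hε => ?_) zero_le
  obtain ⟨n, hn⟩ := ENNReal.exists_inv_two_pow_lt hε.ne'
  calc μ {x} ≤ μ (cyl (take x n)) := measure_mono (singleton_subset_iff.2 (mem_cyl_take_self x n))
    _ < ε := by rwa [measure_cyl_take hμ]

lemma measure_cyl_add_cyl_le (hμ : IsFairCoin μ) {w u : List (ZMod 2)}
    (h : u.length ≤ w.length) : μ (cyl w + cyl u) ≤ 2⁻¹ ^ u.length := by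
  obtain ⟨x, hx⟩ : (cyl w).Nonempty := ⟨fun i => w.getD i 0, fun _ _ => rfl⟩
  obtain ⟨y, hy⟩ : (cyl u).Nonempty := ⟨fun i => u.getD i 0, fun _ _ => rfl⟩
  refine (measure_mono ?_).trans (measure_cyl_take hμ (x + y) u.length).le
  rintro _ ⟨x', hx', y', hy', rfl⟩
  refine mem_cyl_take.2 fun i hi => ?_
  simp only [Pi.add_apply]
  rw [hx' i (hi.trans_le h), hx i (hi.trans_le h), hy' i hi, hy i hi]

lemma exists_cyl_cover (hμ : IsFairCoin μ) {Z : Set CS} (hZ : μ Z = 0) {ε : ℝ≥0∞} (hε : ε ≠ 0) :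
    ∃ M : Set (List (ZMod 2)), Z ⊆ ⋃ w ∈ M, cyl w ∧ ∑' w : M, (2⁻¹ : ℝ≥0∞) ^ w.1.length ≤ ε := by
  have := hμ.1
  obtain ⟨U, hZU, hU, hUε⟩ := Z.exists_isOpen_lt_of_lt ε (hZ ▸ pos_iff_ne_zero.2 hε)
  set M := {w : List (ZMod 2) | cyl w ⊆ U ∧ ∀ m < w.length, ¬ cyl (w.take m) ⊆ U}
  have hcover : U ⊆ ⋃ w ∈ M, cyl w := by
    intro x hx
    classical
    have hex := exists_cyl_take_subset hU hx
    refine mem_biUnion (x := take x (Nat.find hex)) ⟨Nat.find_spec hex, fun m hm => ?_⟩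
      (mem_cyl_take_self x _)
    rw [length_take] at hm
    have htake := List.prefix_iff_eq_take.1 (take_prefix_take x hm.le)
    rw [length_take] at htake
    rw [← htake]
    exact Nat.find_min hex hm
  have hdisj : M.PairwiseDisjoint cyl := by
    have key : ∀ u ∈ M, ∀ w ∈ M, u <+: w → u = w := fun u hu w hw huw => by
      by_contra hne
      have hlt := lt_of_le_of_ne huw.length_le fun h => hne (huw.eq_of_length h)
      exact hw.2 _ hlt (List.prefix_iff_eq_take.1 huw ▸ hu.1)
    intro u hu w hw hne
    refine Set.disjoint_left.2 fun x hxu hxw => hne ?_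
    rcases prefix_or_prefix_of_mem_cyl hxu hxw with h | h
    exacts [key u hu w hw h, (key w hw u hu h).symm]
  refine ⟨M, hZU.trans hcover, ?_⟩
  calc ∑' w : M, (2⁻¹ : ℝ≥0∞) ^ w.1.length = ∑' w : M, μ (cyl w) := by simp only [hμ.2]
    _ = μ (⋃ w ∈ M, cyl w) :=
        (measure_biUnion M.to_countable hdisj fun w _ => measurableSet_cyl w).symm
    _ ≤ ε := (measure_mono (iUnion₂_subset fun w hw => hw.1)).trans hUε.le

variable {P : Set CS} (A : ℕ → ℕ)

lemma measure_fusionSet_add_cyl_le (hμ : IsFairCoin μ) (hP : Perfect P) (hPne : P.Nonempty)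
    {u : List (ZMod 2)} {j : ℕ} (hj : u.length ≤ A j) :
    μ (fusionSet P A + cyl u) ≤ 2 ^ j * 2⁻¹ ^ u.length := by
  have hcover : fusionSet P A ⊆ ⋃ v : Fin j → ZMod 2, cyl (splitNode P A (List.ofFn v)) := by
    rintro _ ⟨b, rfl⟩
    exact mem_iUnion.2 ⟨fun i => b i, fusionMap_mem_cyl A hP hPne b j⟩
  calc μ (fusionSet P A + cyl u)
      ≤ μ (⋃ v : Fin j → ZMod 2, (cyl (splitNode P A (List.ofFn v)) + cyl u)) := by
        rw [← iUnion_add]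
        exact measure_mono (add_subset_add_right hcover)
    _ ≤ ∑ v : Fin j → ZMod 2, μ (cyl (splitNode P A (List.ofFn v)) + cyl u) :=
        measure_iUnion_fintype_le _ _
    _ ≤ ∑ _v : Fin j → ZMod 2, (2⁻¹ : ℝ≥0∞) ^ u.length := by
        refine Finset.sum_le_sum fun v _ => measure_cyl_add_cyl_le hμ (hj.trans ?_)
        simpa using le_length_splitNode A hP hPne (List.ofFn v)
    _ = 2 ^ j * 2⁻¹ ^ u.length := by simp [ZMod.card]

-- For the least `j` with `u.length ≤ A j`, the factor `2 ^ j` is at most `2 ^ k` or one term of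
-- the series; summed over a cover, this splits into the weight of the cover and of its tails.
lemma measure_fusionSet_add_cyl_le_tsum (hμ : IsFairCoin μ) (hP : Perfect P)
    (hPne : P.Nonempty) (hA : ∀ j, j ≤ A j) (k : ℕ) (u : List (ZMod 2)) :
    μ (fusionSet P A + cyl u) ≤ 2 ^ k * 2⁻¹ ^ u.length +
      ∑' i, 2 ^ (k + i + 1) * if A (k + i) < u.length then 2⁻¹ ^ u.length else 0 := by
  by_cases hk : u.length ≤ A k
  · exact (measure_fusionSet_add_cyl_le A hμ hP hPne hk).trans le_self_add
  classical
  have hex : ∃ i, u.length ≤ A (k + (i + 1)) := ⟨u.length, by grind⟩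
  obtain ⟨i, hi, hmin⟩ : ∃ i, u.length ≤ A (k + (i + 1)) ∧
      ∀ i' < i, ¬ u.length ≤ A (k + (i' + 1)) :=
    ⟨Nat.find hex, Nat.find_spec hex, fun _ => Nat.find_min hex⟩
  have hlt : A (k + i) < u.length := by
    cases i with
    | zero => simpa using hk
    | succ i => simpa using hmin i i.lt_succ_self
  calc μ (fusionSet P A + cyl u) ≤ 2 ^ (k + i + 1) * 2⁻¹ ^ u.length :=
        measure_fusionSet_add_cyl_le A hμ hP hPne hi
    _ = 2 ^ (k + i + 1) * if A (k + i) < u.length then 2⁻¹ ^ u.length else 0 := by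
        rw [if_pos hlt]
    _ ≤ _ := (ENNReal.le_tsum i).trans le_add_self

lemma exists_measure_fusionSet_add_eq_zero (hμ : IsFairCoin μ) {X : Set CS} (hX : μ X = 0)
    (hP : Perfect P) (hPne : P.Nonempty) :
    ∃ A : ℕ → ℕ, μ (fusionSet P A + X) = 0 := by
  choose M hMX hMsum using fun k : ℕ =>
    exists_cyl_cover hμ hX (pow_ne_zero (2 * k) (ENNReal.inv_ne_zero.2 ENNReal.ofNat_ne_top :
      (2⁻¹ : ℝ≥0∞) ≠ 0))
  set tail : ℕ → ℕ → ℝ≥0∞ := fun k L =>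
    ∑' w : M k, if L < w.1.length then 2⁻¹ ^ w.1.length else 0
  have htail : ∀ k i, ∃ L₀, ∀ L ≥ L₀, tail k L ≤ 2⁻¹ ^ (2 * i + 1) := fun k i =>
    eventually_atTop.1 ((ENNReal.tendsto_tsum_ite_lt_atTop
      (ne_top_of_le_ne_top (by simp) (hMsum k)) _).eventually (Iic_mem_nhds
      (ENNReal.pow_pos (ENNReal.inv_pos.2 ENNReal.ofNat_ne_top) _)))
  choose L₀ hL₀ using htail
  -- the `i`-th splitting level beats the tails of the first `i + 1` covers
  set A : ℕ → ℕ := fun i => i + ∑ k ∈ Finset.range (i + 1), L₀ k i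
  have hA : ∀ k i, tail k (A (k + i)) ≤ 2⁻¹ ^ (2 * (k + i) + 1) := fun k i =>
    hL₀ k (k + i) _ (le_add_left (Finset.single_le_sum (f := fun k' => L₀ k' (k + i))
      (fun _ _ => zero_le) (Finset.mem_range.2 (show k < k + i + 1 by omega))))
  refine ⟨A, le_antisymm (ge_of_tendsto' (f := fun k : ℕ => 3 * (2⁻¹ : ℝ≥0∞) ^ k)
    (by simpa using ENNReal.Tendsto.const_mul (ENNReal.tendsto_pow_atTop_nhds_zero_of_lt_one
      (by norm_num)) (Or.inr (by simp : (3 : ℝ≥0∞) ≠ ⊤))) fun k => ?_) zero_le⟩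
  calc μ (fusionSet P A + X) ≤ ∑' w : M k, μ (fusionSet P A + cyl w) := by
        refine (measure_mono (add_subset_add_left (hMX k))).trans ?_
        rw [add_iUnion₂]
        exact measure_biUnion_le _ (M k).to_countable _
    _ ≤ ∑' w : M k, (2 ^ k * 2⁻¹ ^ w.1.length + ∑' i, 2 ^ (k + i + 1) *
          if A (k + i) < w.1.length then 2⁻¹ ^ w.1.length else 0) :=
        ENNReal.tsum_le_tsum fun w =>
          measure_fusionSet_add_cyl_le_tsum A hμ hP hPne (fun j => le_self_add) k w
    _ = 2 ^ k * ∑' w : M k, 2⁻¹ ^ w.1.length + ∑' i, 2 ^ (k + i + 1) * tail k (A (k + i)) := by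
        simp only [ENNReal.tsum_add, ENNReal.tsum_mul_left, tail]
        rw [ENNReal.tsum_comm]
        simp only [ENNReal.tsum_mul_left]
    _ ≤ 2 ^ k * 2⁻¹ ^ (k + k) + ∑' i, 2 ^ (k + i + 1) * 2⁻¹ ^ ((k + i + 1) + (k + i)) := by
        gcongr with i
        · rw [← two_mul]; exact hMsum k
        · rw [show k + i + 1 + (k + i) = 2 * (k + i) + 1 by ring]
          exact hA k i
    _ = 2⁻¹ ^ k + ∑' i, 2⁻¹ ^ (k + i) := by simp only [ENNReal.two_pow_mul_inv_two_pow_add]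
    _ = 3 * 2⁻¹ ^ k := by
        simp_rw [pow_add _ k, ENNReal.tsum_mul_left, ENNReal.tsum_geometric,
          ENNReal.one_sub_inv_two, inv_inv]
        ring

end FairCoin

section Translation

variable {X Q : Set CS} {ν : Measure CS}

lemma preimage_add_left_cyl_take (s x : CS) (n : ℕ) :
    (s + ·) ⁻¹' cyl (take x n) = cyl (take (s + x) n) := by
  ext y
  simp only [mem_preimage, mem_cyl_take, Pi.add_apply]
  refine forall₂_congr fun i _ => ⟨fun h => ?_, fun h => ?_⟩
  · rw [← h, ← add_assoc, CharTwo.add_self_eq_zero, zero_add]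
  · rw [h, ← add_assoc, CharTwo.add_self_eq_zero, zero_add]

lemma _root_.IsCanonical.measure_cyl_append_eq (hν : IsCanonical Q ν) {v : List (ZMod 2)}
    (hv : Branch Q v) (a b : ZMod 2) :
    ν (cyl (v ++ [a])) = ν (cyl (v ++ [b])) := by
  rcases zmod_two_eq_zero_or_eq_one a with rfl | rfl <;>
    rcases zmod_two_eq_zero_or_eq_one b with rfl | rfl
  exacts [rfl, hν.2.2 v hv, (hν.2.2 v hv).symm, rfl]

lemma map_add_left_apply (s : CS) (t : Set CS) : ν.map (s + ·) t = ν ((s + ·) ⁻¹' t) :=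
  (MeasurableEquiv.addLeft s).map_apply t

lemma _root_.IsCanonical.map_add_left (hν : IsCanonical Q ν) (s : CS) :
    IsCanonical ((s + ·) ⁻¹' Q) (ν.map (s + ·)) := by
  have := hν.1
  refine ⟨Measure.isProbabilityMeasure_map (measurable_const_add s).aemeasurable, ?_,
    fun u hu => ?_⟩
  · rw [map_add_left_apply, preimage_preimage]
    simpa [add_add_cancel_left] using hν.2.1
  obtain ⟨⟨y, hy, hyQ⟩, ⟨y', hy', hy'Q⟩⟩ := hu
  have hmap : ∀ {z : CS} {a : ZMod 2}, z ∈ cyl (u ++ [a]) →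
      ν.map (s + ·) (cyl (u ++ [a])) = ν (cyl (take (s + z) u.length ++ [(s + z) u.length])) :=
    fun hz => by
      rw [map_add_left_apply, ← take_eq_of_mem_cyl_append hz, preimage_add_left_cyl_take, take_succ]
  have htake : take (s + y') u.length = take (s + y) u.length := take_congr fun i hi => by
    simp only [Pi.add_apply, cyl_anti (List.prefix_append _ _) hy i hi,
      cyl_anti (List.prefix_append _ _) hy' i hi]
  have hne : (s + y) u.length ≠ (s + y') u.length := by
    simp [coord_eq_of_mem_cyl_append hy, coord_eq_of_mem_cyl_append hy']
  have hbranch : Branch Q (take (s + y) u.length) := by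
    refine branch_of_ne hne ⟨s + y, ?_, hyQ⟩ ⟨s + y', ?_, hy'Q⟩
    · rw [← take_succ]; exact mem_cyl_take_self _ _
    · rw [← htake, ← take_succ]; exact mem_cyl_take_self _ _
  rw [hmap hy, hmap hy', htake]
  exact hν.measure_cyl_append_eq hbranch _ _

lemma _root_.PerfSet.preimage_add_left (hQ : PerfSet Q) (s : CS) : PerfSet ((s + ·) ⁻¹' Q) := by
  have hinv : Function.LeftInverse (s + ·) (s + ·) := add_add_cancel_left s
  rw [← image_eq_preimage_of_inverse hinv hinv]
  exact ⟨hQ.1.image_of_isCompact hQ.1.closed.isCompact (continuous_const_add s)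
    hinv.injective, hQ.2.image _⟩

lemma _root_.PerfectlyNull.measure_preimage_add_left_inter (hX : PerfectlyNull X)
    (hQ : PerfSet Q) (hν : IsCanonical Q ν) (s : CS) : ν ((s + ·) ⁻¹' X ∩ Q) = 0 := by
  have := hX _ (hQ.preimage_add_left s) _ (hν.map_add_left s)
  rw [map_add_left_apply, preimage_inter, preimage_preimage] at this
  simpa only [add_add_cancel_left, preimage_id'] using this

lemma _root_.PerfectlyNull.measure_add_inter_eq_zero (hX : PerfectlyNull X) (hQ : PerfSet Q)
    (hν : IsCanonical Q ν) {T : Set CS} (hT : (T ∩ (Q + X)).Countable) :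
    ν ((T + X) ∩ Q) = 0 := by
  refine measure_mono_null ?_ ((measure_biUnion_null_iff hT).2 fun s _ =>
    hX.measure_preimage_add_left_inter hQ hν s)
  rintro _ ⟨⟨s, hs, x, hx, rfl⟩, hsxQ⟩
  refine mem_biUnion ⟨hs, s + x, hsxQ, x, hx, ?_⟩ ⟨?_, hsxQ⟩
  · change s + x + x = s
    rw [add_assoc, add_self_eq_zero, add_zero]
  · simpa [mem_preimage, add_add_cancel_left] using hx

lemma _root_.PerfectlyNull.measure_eq_zero (hX : PerfectlyNull X) {μ : Measure CS}
    (hμ : IsFairCoin μ) : μ X = 0 := by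
  have := hμ.1
  simpa using hX univ ⟨perfect_univ, univ_nonempty⟩ μ
    ⟨hμ.1, measure_univ, fun w _ => by rw [hμ.2, hμ.2]; simp⟩

end Translation

end Cantor

open Cantor in
/-- The algebraic sum of a Sierpiński set and a perfectly null set is an
`s₀`-set. -/
theorem stmt_11 (μ : Measure CS) (hμ : IsFairCoin μ) (S : Set CS) (hS : Sierpinski μ S)
    (X : Set CS) (hX : PerfectlyNull X) : S0Set (S + X) := by
  rintro P ⟨hP, hPne⟩
  obtain ⟨A, hA⟩ := exists_measure_fusionSet_add_eq_zero hμ (hX.measure_eq_zero hμ) hP hPne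
  set Q := fusionSet P A
  set ν := μ.map (fusionMap P A)
  have hν : IsCanonical Q ν := isCanonical_map_fusionMap A hμ hP hPne
  have hSXQ : ν ((S + X) ∩ Q) = 0 := hX.measure_add_inter_eq_zero
    ⟨perfect_fusionSet A hP hPne, range_nonempty _⟩ hν (hS.2 _ hA)
  have := hν.1
  have : NullSingletonClass μ := ⟨measure_singleton_eq_zero hμ⟩
  have : NullSingletonClass ν := Measure.nullSingletonClass_map
    (continuous_fusionMap A).measurable (fusionMap_injective A hP hPne)
  obtain ⟨D, hD, hDne, hDQ, hDSX⟩ := exists_perfect_subset_disjoint_of_measure_eq_zero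
    (isClosed_fusionSet A).measurableSet (by rw [hν.2.1]; exact one_ne_zero) (measure_ne_top _ _)
    hSXQ
  refine ⟨D, ⟨hD, hDne⟩, hDQ.trans (fusionSet_subset A hP hPne), ?_⟩
  exact eq_empty_of_forall_notMem fun x ⟨hxD, hxSX⟩ =>
    hDSX.notMem_of_mem_left hxD ⟨hxSX, hDQ hxD⟩
end

section
/- If X, Y ⊆ 2^ω are both S-null for every Silver perfect set S, then h[X × Y] is S-null for every Silver perfect set S (i.e., the class vPN is closed under taking products). -/
/-!
Write the Silver set as `silverSet f`. Infinitely many of its free coordinates are even, say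
(or odd: symmetric), and `z ↦ z ∘ (2 * ·)` pushes its canonical measure to a canonical measure
of the Silver set `silverSet (f ∘ (2 * ·))`: a free coordinate `m` splits every set determined
by the coordinates below `m` into halves of equal measure. As `interleave (x, y) ∘ (2 * ·) = x`,
the set `interleave '' (X ×ˢ Y) ∩ silverSet f` lies in the preimage of the null set
`X ∩ silverSet (f ∘ (2 * ·))`.
-/

open MeasureTheory Set Pointwise

def silverSet (f : ℕ → Option (ZMod 2)) : Set CS := {x | ∀ n b, f n = some b → x n = b}

lemma measurableSet_silverSet (f : ℕ → Option (ZMod 2)) : MeasurableSet (silverSet f) := by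
  simp only [silverSet, ofPred_forall]
  measurability

lemma measurableSet_cyl (w : List (ZMod 2)) : MeasurableSet (cyl w) := by
  simp only [cyl, ofPred_forall]
  measurability

lemma mem_cyl_append {w : List (ZMod 2)} {b : ZMod 2} {z : CS} :
    z ∈ cyl (w ++ [b]) ↔ z ∈ cyl w ∧ z w.length = b := by
  simp only [cyl, mem_ofPred_eq, List.length_append, List.length_singleton]
  refine ⟨fun h => ⟨fun i hi => ?_, ?_⟩, fun ⟨h, hb⟩ i hi => ?_⟩
  · rw [h i (by omega), List.getD_append _ _ _ _ hi]
  · simpa using h w.length (by omega)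
  · rcases Nat.lt_succ_iff_lt_or_eq.mp hi with hi | rfl
    · rw [h i hi, List.getD_append _ _ _ _ hi]
    · simpa using hb

lemma mem_cyl_ofFn {m : ℕ} {τ : Fin m → ZMod 2} {z : CS} :
    z ∈ cyl (List.ofFn τ) ↔ ∀ i : Fin m, z i = τ i := by
  simp only [cyl, mem_ofPred_eq, List.length_ofFn]
  refine ⟨fun h i => ?_, fun h i hi => ?_⟩
  · simpa using h i i.isLt
  · simpa [hi] using h ⟨i, hi⟩

lemma branch_silverSet_iff {f : ℕ → Option (ZMod 2)} {w : List (ZMod 2)} :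
    Branch (silverSet f) w ↔ f w.length = none ∧ (cyl w ∩ silverSet f).Nonempty := by
  constructor
  · rintro ⟨⟨x, hx, hxS⟩, ⟨y, hy, hyS⟩⟩
    refine ⟨Option.eq_none_iff_forall_ne_some.mpr fun c hc => ?_,
      ⟨x, (mem_cyl_append.mp hx).1, hxS⟩⟩
    have h0 : (0 : ZMod 2) = c := (mem_cyl_append.mp hx).2 ▸ hxS _ _ hc
    have h1 : (1 : ZMod 2) = c := (mem_cyl_append.mp hy).2 ▸ hyS _ _ hc
    exact zero_ne_one (h0.trans h1.symm)
  · rintro ⟨hfw, x, hx, hxS⟩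
    have hext : ∀ b, (cyl (w ++ [b]) ∩ silverSet f).Nonempty := fun b => by
      refine ⟨Function.update x w.length b, mem_cyl_append.mpr ⟨fun i hi => ?_, by simp⟩,
        fun n c hc => ?_⟩
      · rw [Function.update_of_ne hi.ne]
        exact hx i hi
      · rw [Function.update_of_ne (by rintro rfl; simp [hfw] at hc)]
        exact hxS n c hc
    exact ⟨hext 0, hext 1⟩

section Canonical

variable {f : ℕ → Option (ZMod 2)} {ν : Measure CS}

lemma IsCanonical.measure_eq_zero_of_disjoint (hν : IsCanonical (silverSet f) ν) {A : Set CS}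
    (hA : Disjoint A (silverSet f)) : ν A = 0 := by
  have := hν.1
  refine measure_mono_null hA.subset_compl_right ?_
  rw [prob_compl_eq_zero_iff (measurableSet_silverSet f)]
  exact hν.2.1

lemma IsCanonical.measure_cyl_append_zero_eq_one (hν : IsCanonical (silverSet f) ν)
    {w : List (ZMod 2)} (hw : f w.length = none) :
    ν (cyl (w ++ [0])) = ν (cyl (w ++ [1])) := by
  by_cases hne : (cyl w ∩ silverSet f).Nonempty
  · exact hν.2.2 w (branch_silverSet_iff.mpr ⟨hw, hne⟩)
  · have hdisj : ∀ b, Disjoint (cyl (w ++ [b])) (silverSet f) := fun b =>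
      Set.disjoint_left.mpr fun z hz hzS => hne ⟨z, (mem_cyl_append.mp hz).1, hzS⟩
    rw [hν.measure_eq_zero_of_disjoint (hdisj 0), hν.measure_eq_zero_of_disjoint (hdisj 1)]

lemma IsCanonical.measure_inter_coord_zero_eq_one (hν : IsCanonical (silverSet f) ν) {m : ℕ}
    (hm : f m = none) {A : Set CS} (hA : ∀ z z', (∀ i < m, z i = z' i) → z ∈ A → z' ∈ A) :
    ν (A ∩ {z | z m = 0}) = ν (A ∩ {z | z m = 1}) := by
  classical
  -- `A` is the disjoint union of the cylinders of length `m` indexed by `T`.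
  let T : Finset (Fin m → ZMod 2) :=
    Finset.univ.filter fun τ => ∃ z ∈ A, ∀ i : Fin m, z i = τ i
  have hdec : ∀ b : ZMod 2, A ∩ {z | z m = b} = ⋃ τ ∈ T, cyl (List.ofFn τ ++ [b]) := by
    intro b
    ext z
    simp only [mem_inter_iff, mem_ofPred_eq, mem_iUnion, exists_prop, mem_cyl_append,
      mem_cyl_ofFn, List.length_ofFn, T, Finset.mem_filter, Finset.mem_univ, true_and]
    constructor
    · rintro ⟨hz, hzm⟩
      exact ⟨fun i => z i, ⟨z, hz, fun _ => rfl⟩, fun _ => rfl, hzm⟩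
    · rintro ⟨τ, ⟨z', hz', hz'τ⟩, hzτ, hzm⟩
      exact ⟨hA z' z (fun i hi => (hz'τ ⟨i, hi⟩).trans (hzτ ⟨i, hi⟩).symm) hz', hzm⟩
  have hdisj : ∀ b : ZMod 2,
      (T : Set (Fin m → ZMod 2)).PairwiseDisjoint fun τ => cyl (List.ofFn τ ++ [b]) := by
    intro b τ _ τ' _ hne
    refine Set.disjoint_left.mpr fun z hz hz' => hne (funext fun i => ?_)
    rw [← mem_cyl_ofFn.mp (mem_cyl_append.mp hz).1 i, mem_cyl_ofFn.mp (mem_cyl_append.mp hz').1 i]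
  rw [hdec 0, hdec 1, measure_biUnion_finset (hdisj 0) fun _ _ => measurableSet_cyl _,
    measure_biUnion_finset (hdisj 1) fun _ _ => measurableSet_cyl _]
  exact Finset.sum_congr rfl fun τ _ =>
    hν.measure_cyl_append_zero_eq_one (by rwa [List.length_ofFn])

lemma silverSet_subset_preimage_comp (r : ℕ → ℕ) :
    silverSet f ⊆ (· ∘ r) ⁻¹' silverSet (f ∘ r) :=
  fun _ hx n b hb => hx (r n) b hb

lemma IsCanonical.map_comp (hν : IsCanonical (silverSet f) ν) {r : ℕ → ℕ} (hr : StrictMono r) :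
    IsCanonical (silverSet (f ∘ r)) (ν.map (· ∘ r)) := by
  have := hν.1
  have hmeas : Measurable fun z : CS => z ∘ r := by fun_prop
  refine ⟨Measure.isProbabilityMeasure_map hmeas.aemeasurable, le_antisymm prob_le_one ?_,
    fun w hw => ?_⟩
  · calc (1 : ENNReal) = ν (silverSet f) := hν.2.1.symm
      _ ≤ ν ((· ∘ r) ⁻¹' silverSet (f ∘ r)) := measure_mono (silverSet_subset_preimage_comp r)
      _ ≤ _ := Measure.le_map_apply hmeas.aemeasurable _
  · have hpre : ∀ b, (· ∘ r) ⁻¹' cyl (w ++ [b]) =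
        (· ∘ r) ⁻¹' cyl w ∩ {z : CS | z (r w.length) = b} := fun b => by
      ext z
      exact mem_cyl_append
    rw [Measure.map_apply hmeas (measurableSet_cyl _), Measure.map_apply hmeas (measurableSet_cyl _),
      hpre, hpre]
    refine hν.measure_inter_coord_zero_eq_one (branch_silverSet_iff.mp hw).1
      fun z z' hzz' hz i hi => ?_
    change z' (r i) = _
    rw [← hzz' (r i) (hr hi)]
    exact hz i hi

end Canonical

lemma pNull_silverSet_of_comp {f : ℕ → Option (ZMod 2)} {r : ℕ → ℕ} (hr : StrictMono r)
    {X A : Set CS} (hX : PNull (silverSet (f ∘ r)) X) (hA : ∀ z ∈ A, z ∘ r ∈ X) :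
    PNull (silverSet f) A := by
  intro ν hν
  have hmeas : Measurable fun z : CS => z ∘ r := by fun_prop
  have hsub : A ∩ silverSet f ⊆ (· ∘ r) ⁻¹' (X ∩ silverSet (f ∘ r)) :=
    fun z hz => ⟨hA z hz.1, silverSet_subset_preimage_comp r hz.2⟩
  refine measure_mono_null hsub (nonpos_iff_eq_zero.mp ?_)
  calc ν ((· ∘ r) ⁻¹' (X ∩ silverSet (f ∘ r))) ≤ ν.map (· ∘ r) (X ∩ silverSet (f ∘ r)) :=
        Measure.le_map_apply hmeas.aemeasurable _
    _ = 0 := hX _ (hν.map_comp hr)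

lemma Set.Infinite.preimage_two_mul_or_two_mul_add_one {s : Set ℕ} (hs : s.Infinite) :
    ((2 * ·) ⁻¹' s).Infinite ∨ ((2 * · + 1) ⁻¹' s).Infinite := by
  by_contra! h
  refine hs (((h.1.image (2 * ·)).union (h.2.image (2 * · + 1))).subset fun n hn => ?_)
  rcases Nat.even_or_odd' n with ⟨k, rfl | rfl⟩
  exacts [Or.inl ⟨k, hn, rfl⟩, Or.inr ⟨k, hn, rfl⟩]

lemma interleave_comp_two_mul (p : CS × CS) : interleave p ∘ (2 * ·) = p.1 := by
  funext n
  simp [interleave]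

lemma interleave_comp_two_mul_add_one (p : CS × CS) : interleave p ∘ (2 * · + 1) = p.2 := by
  funext n
  simp [interleave, Nat.add_mod, Nat.add_div_of_dvd_right]

/-- If `X, Y` are `S`-null for every Silver perfect `S`, then so is
`h[X × Y]` (the class `vPN` is closed under products). -/
theorem stmt_13 (X Y : Set CS) (hX : ∀ S, SilverPerf S → PNull S X)
    (hY : ∀ S, SilverPerf S → PNull S Y) :
    ∀ S, SilverPerf S → PNull S (interleave '' (X ×ˢ Y)) := by
  rintro S ⟨f, hinf, rfl⟩
  rcases hinf.preimage_two_mul_or_two_mul_add_one with hev | hodd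
  · refine pNull_silverSet_of_comp (strictMono_mul_left_of_pos two_pos) (hX _ ⟨_, hev, rfl⟩) ?_
    rintro _ ⟨p, hp, rfl⟩
    simpa [interleave_comp_two_mul] using hp.1
  · refine pNull_silverSet_of_comp (fun a b h => by omega) (hY _ ⟨_, hodd, rfl⟩) ?_
    rintro _ ⟨p, hp, rfl⟩
    simpa [interleave_comp_two_mul_add_one] using hp.2
end

section
/- Every strongly null subset of 2^ω is perfectly null in the transitive sense: if X ⊆ 2^ω is strongly null, then for every perfect set P ⊆ 2^ω there exists a G_δ set G ⊇ X such that for every t ∈ 2^ω the set (G + t) ∩ P is P-null. -/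
open MeasureTheory Set Pointwise

/-!
Fix the perfect set `P`. Every canonical measure `ν` of `P` halves the mass of a cylinder at each
branching node of `P`, and every point of `P` passes through infinitely many branching nodes, while
cylinders around points outside the closed set `P` eventually miss it. By compactness of `2^ω`
this gives, for each `k`, a length `N k`, depending on `P` only and not on `ν`, such that every
cylinder of length `N k` has `ν`-measure at most `2^{-k}`. The same holds for all translates of
such cylinders, since translates of cylinders are cylinders of the same length. Strong nullness
covers `X`, for each `m`, by cylinders of lengths `N (m + n + 1)`, `n ∈ ℕ`; the intersection over
`m` of these open covers is a `G_δ` set `G ⊇ X`, and `ν ((G + t) ∩ P) ≤ 2^{-m}` for all `m`.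
-/

open PiNat Function

def initSeg (x : CS) (n : ℕ) : List (ZMod 2) := List.ofFn fun i : Fin n => x i

lemma cyl_initSeg (x : CS) (n : ℕ) : cyl (initSeg x n) = cylinder x n := by
  ext y
  simp only [cyl, initSeg, PiNat.cylinder, List.length_ofFn, mem_ofPred_eq]
  exact forall₂_congr fun i hi => by simp [hi]

lemma initSeg_append (x : CS) (n : ℕ) (b : ZMod 2) :
    initSeg x n ++ [b] = initSeg (update x n b) (n + 1) := by
  rw [initSeg, initSeg, List.ofFn_succ_last]
  congr 2
  · funext i
    simp [i.isLt.ne]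
  · simp

lemma cyl_initSeg_append (x : CS) (n : ℕ) (b : ZMod 2) :
    cyl (initSeg x n ++ [b]) = cylinder (update x n b) (n + 1) := by
  rw [initSeg_append, cyl_initSeg]

lemma cylinder_eq_union_update (x : CS) (n : ℕ) :
    cylinder x n = cylinder (update x n 0) (n + 1) ∪ cylinder (update x n 1) (n + 1) := by
  rw [← iUnion_cylinder_update x n]
  ext y
  simp only [mem_iUnion, mem_union]
  exact ⟨fun ⟨k, hk⟩ => by fin_cases k; exacts [Or.inl hk, Or.inr hk],
    by rintro (h | h) <;> exact ⟨_, h⟩⟩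

lemma disjoint_cylinder_update {E : ℕ → Type*} (x : ∀ n, E n) (n : ℕ) {a b : E n} (hab : a ≠ b) :
    Disjoint (cylinder (update x n a) (n + 1)) (cylinder (update x n b) (n + 1)) :=
  disjoint_left.2 fun y ha hb => hab <| by
    simpa using (ha n n.lt_succ_self).symm.trans (hb n n.lt_succ_self)

lemma IsCanonical.measure_compl {P : Set CS} {ν : Measure CS} (hν : IsCanonical P ν)
    (hP : MeasurableSet P) : ν Pᶜ = 0 := by
  have := hν.1
  exact prob_compl_eq_zero_iff hP |>.2 hν.2.1

lemma IsCanonical.measure_cylinder_succ {P : Set CS} {ν : Measure CS} (hν : IsCanonical P ν)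
    {x : CS} {n : ℕ} (hb : Branch P (initSeg x n)) :
    ν (cylinder x (n + 1)) = 2⁻¹ * ν (cylinder x n) := by
  have heq : ν (cylinder (update x n 0) (n + 1)) = ν (cylinder (update x n 1) (n + 1)) := by
    simpa only [cyl_initSeg_append] using hν.2.2 _ hb
  have hsum : ν (cylinder x n) =
      ν (cylinder (update x n 0) (n + 1)) + ν (cylinder (update x n 1) (n + 1)) := by
    rw [cylinder_eq_union_update, measure_union (disjoint_cylinder_update x n (by decide))
      (isOpen_cylinder _ _ _).measurableSet]
  have halve (a : ENNReal) : a = 2⁻¹ * (a + a) := by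
    rw [← two_mul, ← mul_assoc, ENNReal.inv_mul_cancel two_ne_zero ENNReal.ofNat_ne_top, one_mul]
  conv_lhs => rw [← update_eq_self n x]
  rcases (by decide : ∀ b : ZMod 2, b = 0 ∨ b = 1) (x n) with h | h <;> rw [h, hsum]
  · rw [← heq]
    exact halve _
  · rw [heq]
    exact halve _

lemma branch_initSeg_of_ne {P : Set CS} {x y : CS} {n : ℕ} (hx : x ∈ P) (hy : y ∈ P)
    (hyx : y ∈ cylinder x n) (hn : y n ≠ x n) : Branch P (initSeg x n) := by
  have hxk : x ∈ cylinder (update x n (x n)) (n + 1) := by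
    rw [update_eq_self]
    exact self_mem_cylinder x _
  have hyk : y ∈ cylinder (update x n (y n)) (n + 1) := by
    intro i hi
    rcases Nat.lt_succ_iff_lt_or_eq.1 hi with hi | rfl
    · simp [hi.ne, hyx i hi]
    · simp
  have hk (k : ZMod 2) : (cylinder (update x n k) (n + 1) ∩ P).Nonempty := by
    rcases (by decide : ∀ a b k : ZMod 2, a ≠ b → k = a ∨ k = b) _ _ k hn with rfl | rfl
    exacts [⟨y, hyk, hy⟩, ⟨x, hxk, hx⟩]
  simpa only [Branch, cyl_initSeg_append] using ⟨hk 0, hk 1⟩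

lemma Perfect.exists_branch_initSeg {P : Set CS} (hP : Perfect P) {x : CS} (hx : x ∈ P)
    (m : ℕ) : ∃ n, m ≤ n ∧ Branch P (initSeg x n) := by
  obtain ⟨y, ⟨hym, hyP⟩, hyx⟩ := accPt_iff_nhds.1 (hP.acc x hx) _
    ((isOpen_cylinder _ x m).mem_nhds (self_mem_cylinder x m))
  exact ⟨firstDiff y x, (mem_cylinder_iff_le_firstDiff hyx m).1 hym,
    branch_initSeg_of_ne hx hyP (mem_cylinder_firstDiff y x) (apply_firstDiff_ne hyx)⟩

lemma Perfect.exists_measure_cylinder_le {P : Set CS} (hP : Perfect P) (x : CS) (k : ℕ) :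
    ∃ n, ∀ ν, IsCanonical P ν → ν (cylinder x n) ≤ 2⁻¹ ^ k := by
  by_cases hx : x ∈ P
  · induction k with
    | zero => exact ⟨0, fun ν hν => by have := hν.1; simp⟩
    | succ k ih =>
      obtain ⟨n, hn⟩ := ih
      obtain ⟨n', hnn', hb⟩ := hP.exists_branch_initSeg hx n
      refine ⟨n' + 1, fun ν hν => ?_⟩
      calc ν (cylinder x (n' + 1)) = 2⁻¹ * ν (cylinder x n') := hν.measure_cylinder_succ hb
        _ ≤ 2⁻¹ * 2⁻¹ ^ k := by gcongr; exact (measure_mono (cylinder_anti x hnn')).trans (hn ν hν)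
        _ = 2⁻¹ ^ (k + 1) := (pow_succ' _ _).symm
  · obtain ⟨n, hn⟩ := exists_disjoint_cylinder hP.closed hx
    refine ⟨n, fun ν hν => ?_⟩
    rw [measure_mono_null hn.symm.subset_compl_right (hν.measure_compl hP.closed.measurableSet)]
    exact zero_le

theorem exists_forall_cylinder_of_forall_exists {E : ℕ → Type*} [∀ n, TopologicalSpace (E n)]
    [∀ n, DiscreteTopology (E n)] [CompactSpace (∀ n, E n)] {p : Set (∀ n, E n) → Prop}
    (hp : ∀ ⦃s t⦄, s ⊆ t → p t → p s) (h : ∀ x, ∃ n, p (PiNat.cylinder x n)) :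
    ∃ N, ∀ x, p (PiNat.cylinder x N) := by
  have hopen (n : ℕ) : IsOpen {x | p (PiNat.cylinder x n)} := isOpen_iff_mem_nhds.2 fun x hx =>
    Filter.mem_of_superset ((isOpen_cylinder E x n).mem_nhds (self_mem_cylinder x n)) fun y hy => by
      rwa [mem_ofPred_eq, mem_cylinder_iff_eq.1 hy]
  obtain ⟨N, hN⟩ := isCompact_univ.elim_directed_cover _ hopen (fun x _ => mem_iUnion.2 (h x))
    (Monotone.directed_le fun m n hmn x hx => hp (cylinder_anti x hmn) hx)
  exact ⟨N, fun x => hN (mem_univ x)⟩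

lemma Perfect.exists_forall_measure_cylinder_le {P : Set CS} (hP : Perfect P) (k : ℕ) :
    ∃ N, ∀ x, ∀ ν, IsCanonical P ν → ν (cylinder x N) ≤ 2⁻¹ ^ k :=
  exists_forall_cylinder_of_forall_exists (p := fun s => ∀ ν, IsCanonical P ν → ν s ≤ 2⁻¹ ^ k)
    (fun _ _ hst h ν hν => (measure_mono hst).trans (h ν hν))
    fun x => hP.exists_measure_cylinder_le x k

lemma image_add_right_cylinder {G : Type*} [AddGroup G] (x t : ℕ → G) (n : ℕ) :
    (· + t) '' cylinder x n = cylinder (x + t) n := by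
  ext y
  simp [image_add_right, add_neg_eq_iff_eq_add]

lemma StronglyNull.exists_cylinder_cover {X : Set CS} (hX : StronglyNull X) (N : ℕ → ℕ) :
    ∃ c : ℕ → CS, X ⊆ ⋃ n, cylinder (c n) (N n) := by
  obtain ⟨A, hA, hXA⟩ := hX (fun n => 2⁻¹ ^ N n) fun n => by positivity
  have hcov (n : ℕ) : ∃ c, A n ⊆ cylinder c (N n) := by
    obtain ⟨M, hM, hagree⟩ := hA n
    have hNM : N n < M := (pow_lt_pow_iff_right_of_lt_one₀ (by norm_num) (by norm_num)).1 hM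
    rcases (A n).eq_empty_or_nonempty with h | ⟨a, ha⟩
    · exact ⟨0, h ▸ empty_subset _⟩
    · exact ⟨a, fun y hy i hi => hagree y hy a ha i (hi.trans hNM)⟩
  choose c hc using hcov
  exact ⟨c, hXA.trans (iUnion_mono hc)⟩

lemma tsum_inv_two_pow_add_succ (m : ℕ) :
    ∑' n : ℕ, (2⁻¹ : ENNReal) ^ (m + (n + 1)) = 2⁻¹ ^ m := by
  simp only [pow_add _ m, ENNReal.tsum_mul_left, ENNReal.tsum_geometric_add_one,
    ENNReal.one_sub_inv_two, inv_inv, ENNReal.inv_mul_cancel two_ne_zero ENNReal.ofNat_ne_top,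
    mul_one]

/-- Every strongly null subset of `2^ω` is perfectly null in the transitive
sense: for every perfect `P` there is a `G_δ` set `G ⊇ X` with `(G + t) ∩ P` being
`P`-null for every `t`. -/
theorem stmt_15 (X : Set CS) (hX : StronglyNull X) :
    ∀ P, PerfSet P → ∃ G : Set CS, IsGδ G ∧ X ⊆ G ∧
      ∀ t : CS, PNull P ((fun g => g + t) '' G) := by
  intro P hP
  choose N hN using hP.1.exists_forall_measure_cylinder_le
  choose c hc using fun m => hX.exists_cylinder_cover fun n => N (m + (n + 1))
  refine ⟨⋂ m, ⋃ n, cylinder (c m n) (N (m + (n + 1))),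
    .iInter fun m => (isOpen_iUnion fun n => isOpen_cylinder _ _ _).isGδ, subset_iInter hc,
    fun t ν hν => ?_⟩
  have hsmall (m : ℕ) :
      ν (((· + t) '' ⋂ m, ⋃ n, cylinder (c m n) (N (m + (n + 1)))) ∩ P) ≤ 2⁻¹ ^ m :=
    calc _ ≤ ν (⋃ n, cylinder (c m n + t) (N (m + (n + 1)))) := by
          refine measure_mono (inter_subset_left.trans ((image_mono (iInter_subset _ m)).trans ?_))
          simp only [image_iUnion, image_add_right_cylinder, subset_refl]
      _ ≤ ∑' n, ν (cylinder (c m n + t) (N (m + (n + 1)))) := measure_iUnion_le _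
      _ ≤ ∑' n : ℕ, 2⁻¹ ^ (m + (n + 1)) := ENNReal.tsum_le_tsum fun n => hN _ _ ν hν
      _ = 2⁻¹ ^ m := tsum_inv_two_pow_add_succ m
  exact le_antisymm (ge_of_tendsto' (ENNReal.tendsto_pow_atTop_nhds_zero_iff.2
    ENNReal.one_half_lt_one) hsmall) zero_le
end
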